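/- arXiv:2009.02466 — 5 statements merged into one kernel-verified Lean document; each statement's English description precedes it below -/
import Mathlib

section
/- Let (Ω, ν) be such that the algebra 𝒜(Ω,ν) of functions holomorphic on Ω and continuous on Ω∪T is weakly admissible, let ψ be holomorphic on a neighborhood of the closure of Ω, vanishing precisely on a hypersurface V with ν(T ∩ V) = 0, and for k ∈ ℕ₀ let 𝒜_k(Ω*,ν) = {F = ψ^{-k} G on Ω∖V : G ∈ 𝒜(Ω,ν), F|_T ∈ L²(ν)}. Then 𝒜_k(Ω*,ν) is weakly admissible: for every compact K ⊂ Ω∖V there exists c_K > 0 such that sup_{z∈K}|F(z)| ≤ c_K ‖F|_T‖_{L²(ν)} for all F ∈ 𝒜_k(Ω*,ν). -/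
/-!
On a compact `K ⊆ Ω ∖ V` the continuous function `ψ` is bounded below by some `m > 0`, while
on the boundary it is bounded above by `M`. Writing `F = ψ^{-k} G`, the first bound gives
`|F| ≤ m^{-k} |G|` on `K`, and since `ν`-almost every point lies in `T ∖ V` the second gives
`‖G‖_{L²(ν)} ≤ M^k ‖F‖_{L²(ν)}`. Weak admissibility of `𝒜` bridges the two.
-/

open MeasureTheory

theorem IsCompact.exists_pos_le_norm {X E : Type*} [TopologicalSpace X] [NormedAddCommGroup E]
    {K : Set X} (hK : IsCompact K) {f : X → E} (hf : ContinuousOn f K)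
    (hf0 : ∀ z ∈ K, f z ≠ 0) : ∃ m > 0, ∀ z ∈ K, m ≤ ‖f z‖ := by
  rcases K.eq_empty_or_nonempty with rfl | hne
  · exact ⟨1, one_pos, by simp⟩
  obtain ⟨w, hw, hmin⟩ := hK.exists_isMinOn hne hf.norm
  exact ⟨‖f w‖, norm_pos_iff.2 (hf0 w hw), fun z hz => hmin hz⟩

theorem norm_le_div_pow_of_norm_pow_mul_le {𝕜 : Type*} [NormedDivisionRing 𝕜] {a b : 𝕜}
    {m B : ℝ} (k : ℕ) (hm : 0 < m) (ha : m ≤ ‖a‖) (h : ‖a ^ k * b‖ ≤ B) :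
    ‖b‖ ≤ B / m ^ k := by
  rw [le_div_iff₀ (pow_pos hm k), mul_comm]
  calc m ^ k * ‖b‖ ≤ ‖a‖ ^ k * ‖b‖ := by gcongr
    _ = ‖a ^ k * b‖ := by rw [norm_mul, norm_pow]
    _ ≤ B := h

namespace MeasureTheory

variable {α : Type*} [MeasurableSpace α] {μ : Measure α}

theorem ae_mem_diff_of_measure_compl_eq_zero {s t : Set α} (hs : μ sᶜ = 0)
    (hst : μ (s ∩ t) = 0) : ∀ᵐ x ∂μ, x ∈ s \ t := by
  rw [ae_iff]
  refine measure_mono_null (fun x hx => ?_) (measure_union_null hs hst)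
  by_cases hxs : x ∈ s
  · exact Or.inr ⟨hxs, not_not.1 fun hxt => hx ⟨hxs, hxt⟩⟩
  · exact Or.inl hxs

theorem toReal_eLpNorm_le_mul_of_ae_le_mul {E F : Type*} [NormedAddCommGroup E]
    [NormedAddCommGroup F] {f : α → E} {g : α → F} {c : ℝ} {p : ENNReal} (hc : 0 ≤ c)
    (hg : eLpNorm g p μ ≠ ⊤) (h : ∀ᵐ x ∂μ, ‖f x‖ ≤ c * ‖g x‖) :
    (eLpNorm f p μ).toReal ≤ c * (eLpNorm g p μ).toReal := by
  calc (eLpNorm f p μ).toReal ≤ (ENNReal.ofReal c * eLpNorm g p μ).toReal :=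
        ENNReal.toReal_mono (ENNReal.mul_ne_top ENNReal.ofReal_ne_top hg)
          (eLpNorm_le_mul_eLpNorm_of_ae_le_mul h p)
    _ = c * (eLpNorm g p μ).toReal := by rw [ENNReal.toReal_mul, ENNReal.toReal_ofReal hc]

end MeasureTheory

theorem weak_admissibility_inherited_general
    {n : ℕ} (Ω T : Set (Fin n → ℂ)) (ν : Measure (Fin n → ℂ))
    (ψ : (Fin n → ℂ) → ℂ)
    (hνT : ν Tᶜ = 0) (hνV : ν (T ∩ ψ ⁻¹' {0}) = 0)
    (hψc : ContinuousOn ψ (Ω ∪ T)) (M : ℝ) (hψb : ∀ z ∈ Ω ∪ T, ‖ψ z‖ ≤ M)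
    (𝒜 : Set ((Fin n → ℂ) → ℂ))
    (hadm : ∀ K ⊆ Ω, IsCompact K → ∃ C > 0, ∀ G ∈ 𝒜, ∀ z ∈ K,
      ‖G z‖ ≤ C * (eLpNorm G 2 ν).toReal)
    (k : ℕ) (𝒜k : Set ((Fin n → ℂ) → ℂ))
    (h𝒜k : 𝒜k = {F | (∃ G ∈ 𝒜,
        ∀ z ∈ (Ω \ ψ ⁻¹' {0}) ∪ (T \ ψ ⁻¹' {0}), ψ z ^ k * F z = G z) ∧ MemLp F 2 ν}) :
    ∀ K ⊆ Ω \ ψ ⁻¹' {0}, IsCompact K → ∃ c > 0, ∀ F ∈ 𝒜k, ∀ z ∈ K,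
      ‖F z‖ ≤ c * (eLpNorm F 2 ν).toReal := by
  intro K hK hKc
  have hKΩ : K ⊆ Ω := hK.trans Set.sdiff_subset
  obtain ⟨C, hC, hCG⟩ := hadm K hKΩ hKc
  obtain ⟨m, hm, hmψ⟩ := hKc.exists_pos_le_norm
    (hψc.mono (hKΩ.trans Set.subset_union_left)) fun z hz => (hK hz).2
  have hνTV := ae_mem_diff_of_measure_compl_eq_zero hνT hνV
  refine ⟨C * max M 1 ^ k / m ^ k, by positivity, ?_⟩
  rintro F hF z hz
  rw [h𝒜k] at hF
  obtain ⟨⟨G, hG, hGF⟩, hF2⟩ := hF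
  have hG_L2 : (eLpNorm G 2 ν).toReal ≤ max M 1 ^ k * (eLpNorm F 2 ν).toReal := by
    refine toReal_eLpNorm_le_mul_of_ae_le_mul (by positivity) hF2.eLpNorm_ne_top ?_
    filter_upwards [hνTV] with x hx
    rw [← hGF x (Or.inr hx), norm_mul, norm_pow]
    gcongr
    exact (hψb x (Or.inr hx.1)).trans (le_max_left _ _)
  have hGz : ‖ψ z ^ k * F z‖ ≤ C * (max M 1 ^ k * (eLpNorm F 2 ν).toReal) := by
    rw [hGF z (Or.inl (hK hz))]
    exact (hCG G hG z hz).trans (mul_le_mul_of_nonneg_left hG_L2 hC.le)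
  calc ‖F z‖ ≤ C * (max M 1 ^ k * (eLpNorm F 2 ν).toReal) / m ^ k :=
        norm_le_div_pow_of_norm_pow_mul_le k hm (hmψ z hz) hGz
    _ = C * max M 1 ^ k / m ^ k * (eLpNorm F 2 ν).toReal := by ring

/-- Inheritance of weak admissibility: if `𝒜(Ω,ν) = O(Ω) ∩ C(Ω∪T)` is weakly admissible,
`ψ` is bounded, continuous, and defines the hypersurface `V = ψ⁻¹(0)` with `ν(T∩V) = 0`,
then for each `k` the family `𝒜ₖ(Ω*,ν) = {ψ^{-k}G : G ∈ 𝒜, boundary values in L²(ν)}` is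
weakly admissible on `Ω* = Ω∖V`: point evaluations on compacta of `Ω*` are uniformly
bounded by the boundary `L²(ν)`-norm. -/
theorem weak_admissibility_inherited
    {n : ℕ} (Ω T : Set (Fin n → ℂ)) (ν : Measure (Fin n → ℂ)) [IsFiniteMeasure ν]
    (ψ : (Fin n → ℂ) → ℂ)
    (hνT : ν Tᶜ = 0) (hνV : ν (T ∩ ψ ⁻¹' {0}) = 0)
    (hψc : ContinuousOn ψ (Ω ∪ T)) (M : ℝ) (hψb : ∀ z ∈ Ω ∪ T, ‖ψ z‖ ≤ M)
    (𝒜 : Set ((Fin n → ℂ) → ℂ))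
    (h𝒜 : 𝒜 = {F | DifferentiableOn ℂ F Ω ∧ ContinuousOn F (Ω ∪ T)})
    (hL2 : ∀ G ∈ 𝒜, MemLp G 2 ν)
    (hadm : ∀ K ⊆ Ω, IsCompact K → ∃ C > 0, ∀ G ∈ 𝒜, ∀ z ∈ K,
      ‖G z‖ ≤ C * (eLpNorm G 2 ν).toReal)
    (k : ℕ) (𝒜k : Set ((Fin n → ℂ) → ℂ))
    (h𝒜k : 𝒜k = {F | (∃ G ∈ 𝒜,
        ∀ z ∈ (Ω \ ψ ⁻¹' {0}) ∪ (T \ ψ ⁻¹' {0}), ψ z ^ k * F z = G z) ∧ MemLp F 2 ν}) :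
    ∀ K ⊆ Ω \ ψ ⁻¹' {0}, IsCompact K → ∃ c > 0, ∀ F ∈ 𝒜k, ∀ z ∈ K,
      ‖F z‖ ≤ c * (eLpNorm F 2 ν).toReal :=
  weak_admissibility_inherited_general Ω T ν ψ hνT hνV hψc M hψb 𝒜 hadm k 𝒜k h𝒜k
end

section
/- In the setting of the previous statement, strong admissibility is also inherited: if 𝒜(Ω,ν) is strongly admissible, then so is 𝒜_k(Ω*,ν) for every k ∈ ℕ₀. That is, any sequence {F_n} ⊂ 𝒜_k(Ω*,ν) such that {F_n|_T} is Cauchy in L²(ν) and F_n → 0 uniformly on compacta of Ω* must satisfy F_n|_T → 0 in L²(ν). -/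
/-!
Write `F i = ψ⁻ᵏ G i` with `G i ∈ 𝒜`. As `‖ψ‖ ≤ M` on `T`, the `G i` form an `L²(ν)`-Cauchy
sequence, so by admissibility they converge uniformly on compacta of `Ω` to some `g`; `g` vanishes
on the open set `Ω ∖ V`, where `F i → 0`. Along every complex line `g` is a locally uniform limit
of holomorphic functions, so the one-variable identity theorem forces `g = 0` on the connected
set `Ω`, and strong admissibility of `𝒜` gives `G i → 0` in `L²(ν)`. A subsequence of `G i`, hence
of `F i` (as `ψ ≠ 0` `ν`-a.e.), then tends to `0` `ν`-a.e., and Fatou's lemma upgrades this to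
`L²` convergence of the Cauchy sequence `F i`.
-/

open MeasureTheory Filter Topology Set Metric

section IdentityPrinciple

variable {E F ι : Type*} [NormedAddCommGroup E] [NormedSpace ℂ E]
  [NormedAddCommGroup F] [NormedSpace ℂ F] [CompleteSpace F]
  {G : ι → E → F} {g : E → F} {φ : Filter ι} [φ.NeBot] {s : Set E}

theorem TendstoLocallyUniformlyOn.eqOn_zero_of_convex_of_eventuallyEq_zero
    (hG : TendstoLocallyUniformlyOn G g φ s) (hGd : ∀ᶠ i in φ, DifferentiableOn ℂ (G i) s)
    (hso : IsOpen s) (hsc : Convex ℝ s) {w : E} (hw : w ∈ s) (hgw : g =ᶠ[𝓝 w] 0) :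
    EqOn g 0 s := by
  intro z hz
  let L : ℂ →ₗ[ℂ] E := LinearMap.toSpanSingleton ℂ E (z - w)
  let line : ℂ → E := fun t => w + L t
  have hline : Differentiable ℂ line := (L.toContinuousLinearMap.differentiable).const_add w
  set S := line ⁻¹' s
  have hSo : IsOpen S := hso.preimage hline.continuous
  have hSc : Convex ℝ S := (hsc.translate_preimage_right w).linear_preimage (L.restrictScalars ℝ)
  have hgS : DifferentiableOn ℂ (g ∘ line) S :=
    (hG.comp line (mapsTo_preimage _ _) hline.continuous.continuousOn).differentiableOn
      (hGd.mono fun i hi => hi.comp hline.differentiableOn (mapsTo_preimage _ _)) hSo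
  have hline0 : Tendsto line (𝓝 0) (𝓝 w) := hline.continuous.tendsto' 0 w (by simp [line])
  have := (hgS.analyticOnNhd hSo).eqOn_zero_of_preconnected_of_eventuallyEq_zero
    hSc.isPreconnected (show (0 : ℂ) ∈ S by simpa [S, line] using hw) (hline0.eventually hgw)
  simpa [S, line, L] using this (show (1 : ℂ) ∈ S by simpa [S, line, L] using hz)

theorem TendstoLocallyUniformlyOn.eqOn_zero_of_preconnected_of_eventuallyEq_zero
    (hG : TendstoLocallyUniformlyOn G g φ s) (hGd : ∀ᶠ i in φ, DifferentiableOn ℂ (G i) s)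
    (hso : IsOpen s) (hsc : IsPreconnected s) {w : E} (hw : w ∈ s) (hgw : g =ᶠ[𝓝 w] 0) :
    EqOn g 0 s := by
  suffices hsub : s ⊆ {x | g =ᶠ[𝓝 x] 0} from fun x hx => (hsub hx).self_of_nhds
  refine hsc.subset_of_closure_inter_subset isOpen_setOfPred_eventually_nhds ⟨w, hw, hgw⟩ ?_
  rintro x ⟨hxu, hxs⟩
  obtain ⟨R, hR, hRs⟩ := Metric.isOpen_iff.1 hso x hxs
  obtain ⟨y, hyx, hyu⟩ := mem_closure_iff.1 hxu _ isOpen_ball (mem_ball_self hR)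
  have hball := (hG.mono hRs).eqOn_zero_of_convex_of_eventuallyEq_zero
    (hGd.mono fun i hi => hi.mono hRs) isOpen_ball (convex_ball x R) hyx hyu
  exact eventually_of_mem (ball_mem_nhds x hR) hball

end IdentityPrinciple

theorem tendstoLocallyUniformlyOn_limUnder_of_uniformCauchySeqOn {α β : Type*}
    [TopologicalSpace α] [LocallyCompactSpace α] [UniformSpace β] [CompleteSpace β] [Nonempty β]
    {G : ℕ → α → β} {s : Set α} (hs : IsOpen s)
    (hG : ∀ K ⊆ s, IsCompact K → UniformCauchySeqOn G atTop K) :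
    TendstoLocallyUniformlyOn G (fun z => limUnder atTop (G · z)) atTop s :=
  (tendstoLocallyUniformlyOn_iff_forall_isCompact hs).2 fun K hKs hK =>
    (hG K hKs hK).tendstoUniformlyOn_of_tendsto fun _ hz =>
      ((hG K hKs hK).cauchySeq hz).tendsto_limUnder

section LpCauchy

variable {α E E' : Type*} {m : MeasurableSpace α} [NormedAddCommGroup E] [NormedAddCommGroup E']
  {p : ENNReal} {μ : Measure α}

def LpCauchy (F : ℕ → α → E) (p : ENNReal) (μ : Measure α) : Prop :=
  ∀ ε > (0:ℝ), ∃ N, ∀ i ≥ N, ∀ j ≥ N, eLpNorm (F i - F j) p μ < ENNReal.ofReal ε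

theorem LpCauchy.of_eLpNorm_sub_le {F : ℕ → α → E} {G : ℕ → α → E'} (hF : LpCauchy F p μ) (c : ℝ)
    (hGF : ∀ i j, eLpNorm (G i - G j) p μ ≤ ENNReal.ofReal c * eLpNorm (F i - F j) p μ) :
    LpCauchy G p μ := by
  intro ε hε
  set c' := max c 0 + 1
  have hc' : 0 < c' := by positivity
  obtain ⟨N, hN⟩ := hF (ε / c') (by positivity)
  refine ⟨N, fun i hi j hj => ?_⟩
  calc eLpNorm (G i - G j) p μ ≤ ENNReal.ofReal c * eLpNorm (F i - F j) p μ := hGF i j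
    _ ≤ ENNReal.ofReal c' * eLpNorm (F i - F j) p μ := by
        gcongr; linarith [le_max_left c 0]
    _ < ENNReal.ofReal c' * ENNReal.ofReal (ε / c') := by
        gcongr
        · exact ENNReal.ofReal_ne_top
        · exact hN i hi j hj
    _ = ENNReal.ofReal ε := by rw [← ENNReal.ofReal_mul hc'.le, mul_div_cancel₀ _ hc'.ne']

theorem LpCauchy.uniformCauchySeqOn {F : ℕ → α → E} (hF : LpCauchy F p μ) {K : Set α} {C : ℝ}
    (hC : 0 < C) (hFK : ∀ i j, ∀ z ∈ K, ‖F i z - F j z‖ ≤ C * (eLpNorm (F i - F j) p μ).toReal) :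
    UniformCauchySeqOn F atTop K := by
  rw [Metric.uniformCauchySeqOn_iff]
  intro ε hε
  obtain ⟨N, hN⟩ := hF (ε / C) (by positivity)
  refine ⟨N, fun i hi j hj z hz => ?_⟩
  calc dist (F i z) (F j z) ≤ C * (eLpNorm (F i - F j) p μ).toReal := by
        rw [dist_eq_norm]; exact hFK i j z hz
    _ < C * (ε / C) := by gcongr; exact ENNReal.toReal_lt_of_lt_ofReal (hN i hi j hj)
    _ = ε := mul_div_cancel₀ _ hC.ne'

theorem LpCauchy.tendsto_eLpNorm_sub_of_tendsto_ae {F : ℕ → α → E} (hF : LpCauchy F p μ)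
    (hFm : ∀ i, AEStronglyMeasurable (F i) μ) {f : α → E} {ns : ℕ → ℕ}
    (hns : Tendsto ns atTop atTop) (hf : ∀ᵐ z ∂μ, Tendsto (fun m => F (ns m) z) atTop (𝓝 (f z))) :
    Tendsto (fun i => eLpNorm (F i - f) p μ) atTop (𝓝 0) := by
  rw [ENNReal.tendsto_atTop_zero]
  intro ε hε
  obtain ⟨δ, -, hδ0, hδε⟩ := ENNReal.lt_iff_exists_real_btwn.1 hε
  obtain ⟨N, hN⟩ := hF δ (ENNReal.ofReal_pos.1 hδ0)
  refine ⟨N, fun i hi => ?_⟩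
  have hfatou : eLpNorm (F i - f) p μ ≤ atTop.liminf fun m => eLpNorm (F i - F (ns m)) p μ :=
    Lp.eLpNorm_lim_le_liminf_eLpNorm (fun m => (hFm i).sub (hFm (ns m))) _
      (hf.mono fun z hz => tendsto_const_nhds.sub hz)
  have hlim : (atTop.liminf fun m => eLpNorm (F i - F (ns m)) p μ) ≤ ENNReal.ofReal δ :=
    liminf_le_of_frequently_le' <| Eventually.frequently <|
      (tendsto_atTop.1 hns N).mono fun m hm => (hN i hi (ns m) hm).le
  exact hfatou.trans (hlim.trans hδε.le)

variable {𝕜 : Type*} [NormedDivisionRing 𝕜] {F G : ℕ → α → 𝕜} {φ : α → 𝕜}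

theorem LpCauchy.of_ae_eq_mul (hF : LpCauchy F p μ) {c : ℝ} (hφ : ∀ᵐ z ∂μ, ‖φ z‖ ≤ c)
    (hGF : ∀ᵐ z ∂μ, ∀ i, G i z = φ z * F i z) : LpCauchy G p μ :=
  hF.of_eLpNorm_sub_le c fun i j => eLpNorm_le_mul_eLpNorm_of_ae_le_mul (by
    filter_upwards [hφ, hGF] with z hzφ hzG
    rw [Pi.sub_apply, Pi.sub_apply, hzG, hzG, ← mul_sub, norm_mul]
    gcongr) p

theorem LpCauchy.tendsto_eLpNorm_zero_of_ae_eq_mul (hF : LpCauchy F p μ) (hp : p ≠ 0)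
    (hFm : ∀ i, AEStronglyMeasurable (F i) μ) (hGm : ∀ i, AEStronglyMeasurable (G i) μ)
    (hφ : ∀ᵐ z ∂μ, φ z ≠ 0) (hGF : ∀ᵐ z ∂μ, ∀ i, G i z = φ z * F i z)
    (hG : Tendsto (fun i => eLpNorm (G i) p μ) atTop (𝓝 0)) :
    Tendsto (fun i => eLpNorm (F i) p μ) atTop (𝓝 0) := by
  obtain ⟨ns, hns, hGns⟩ := (tendstoInMeasure_of_tendsto_eLpNorm hp (g := 0) hGm
    aestronglyMeasurable_const (by simpa only [sub_zero] using hG)).exists_seq_tendsto_ae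
  have hFns : ∀ᵐ z ∂μ, Tendsto (fun m => F (ns m) z) atTop (𝓝 0) := by
    filter_upwards [hGns, hGF, hφ] with z hz hzG hzφ
    simpa only [hzG, inv_mul_cancel_left₀ hzφ, Pi.zero_apply, mul_zero] using
      hz.const_mul (φ z)⁻¹
  simpa only [sub_zero] using
    hF.tendsto_eLpNorm_sub_of_tendsto_ae (f := 0) hFm hns.tendsto_atTop hFns

end LpCauchy

theorem strong_admissibility_inherited_general
    {n : ℕ} (Ω T : Set (Fin n → ℂ)) (ν : Measure (Fin n → ℂ))
    (ψ : (Fin n → ℂ) → ℂ)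
    (hΩo : IsOpen Ω) (hΩc : IsPreconnected Ω)
    (hνT : ν Tᶜ = 0) (hνV : ν (T ∩ ψ ⁻¹' {0}) = 0)
    (hψc : ContinuousOn ψ (Ω ∪ T)) (M : ℝ) (hψb : ∀ z ∈ Ω ∪ T, ‖ψ z‖ ≤ M)
    (hne : (Ω \ ψ ⁻¹' {0}).Nonempty)
    (𝒜 : Set ((Fin n → ℂ) → ℂ))
    (h𝒜 : 𝒜 = {F | DifferentiableOn ℂ F Ω ∧ ContinuousOn F (Ω ∪ T)})
    (hL2 : ∀ G ∈ 𝒜, MemLp G 2 ν)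
    (hadm : ∀ K ⊆ Ω, IsCompact K → ∃ C > 0, ∀ G ∈ 𝒜, ∀ z ∈ K,
      ‖G z‖ ≤ C * (eLpNorm G 2 ν).toReal)
    (hstrong : ∀ G : ℕ → (Fin n → ℂ) → ℂ, (∀ i, G i ∈ 𝒜) →
      (∀ ε > (0:ℝ), ∃ N, ∀ i ≥ N, ∀ j ≥ N,
        eLpNorm (G i - G j) 2 ν < ENNReal.ofReal ε) →
      (∀ K ⊆ Ω, IsCompact K → TendstoUniformlyOn G 0 atTop K) →
      Tendsto (fun i => eLpNorm (G i) 2 ν) atTop (nhds 0))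
    (k : ℕ) (𝒜k : Set ((Fin n → ℂ) → ℂ))
    (h𝒜k : 𝒜k = {F | (∃ G ∈ 𝒜,
        ∀ z ∈ (Ω \ ψ ⁻¹' {0}) ∪ (T \ ψ ⁻¹' {0}), ψ z ^ k * F z = G z) ∧ MemLp F 2 ν}) :
    ∀ F : ℕ → (Fin n → ℂ) → ℂ, (∀ i, F i ∈ 𝒜k) →
      (∀ ε > (0:ℝ), ∃ N, ∀ i ≥ N, ∀ j ≥ N,
        eLpNorm (F i - F j) 2 ν < ENNReal.ofReal ε) →
      (∀ K ⊆ Ω \ ψ ⁻¹' {0}, IsCompact K → TendstoUniformlyOn F 0 atTop K) →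
      Tendsto (fun i => eLpNorm (F i) 2 ν) atTop (nhds 0) := by
  intro F hF (hFc : LpCauchy F 2 ν) hFu
  subst h𝒜 h𝒜k
  choose G hG hGF using fun i => (hF i).1
  have hae : ∀ᵐ z ∂ν, z ∈ T ∧ ψ z ≠ 0 := by
    filter_upwards [mem_ae_iff.2 hνT, measure_eq_zero_iff_ae_notMem.1 hνV] with z hzT hzV
    exact ⟨hzT, fun h => hzV ⟨hzT, h⟩⟩
  have hGF_ae : ∀ᵐ z ∂ν, ∀ i, G i z = ψ z ^ k * F i z :=
    hae.mono fun z hz i => (hGF i z (Or.inr ⟨hz.1, hz.2⟩)).symm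
  have hGc : LpCauchy G 2 ν := hFc.of_ae_eq_mul (c := M ^ k)
    (hae.mono fun z hz => norm_pow (ψ z) k ▸ pow_le_pow_left₀ (norm_nonneg _) (hψb z (.inr hz.1)) k)
    hGF_ae
  have hGg := tendstoLocallyUniformlyOn_limUnder_of_uniformCauchySeqOn hΩo fun K hKΩ hK => by
    obtain ⟨C, hC, hCK⟩ := hadm K hKΩ hK
    exact hGc.uniformCauchySeqOn hC fun i j z hz =>
      hCK _ ⟨(hG i).1.sub (hG j).1, (hG i).2.sub (hG j).2⟩ z hz
  set g := fun z => limUnder atTop (G · z)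
  have hgV : ∀ z ∈ Ω \ ψ ⁻¹' {0}, g z = 0 := fun z hz => by
    refine tendsto_nhds_unique (hGg.tendsto_at hz.1) ?_
    have := ((hFu {z} (singleton_subset_iff.2 hz) isCompact_singleton).tendsto_at rfl).const_mul
      (ψ z ^ k)
    simpa [hGF _ z (Or.inl hz)] using this
  have hVo : IsOpen (Ω \ ψ ⁻¹' {0}) :=
    (hψc.mono subset_union_left).isOpen_inter_preimage hΩo isOpen_compl_singleton
  obtain ⟨z₀, hz₀⟩ := hne
  have hg0 : EqOn g 0 Ω := hGg.eqOn_zero_of_preconnected_of_eventuallyEq_zero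
    (.of_forall fun i => (hG i).1) hΩo hΩc hz₀.1 (eventually_of_mem (hVo.mem_nhds hz₀) hgV)
  have hG0 := hstrong G hG hGc fun K hKΩ hK =>
    ((tendstoLocallyUniformlyOn_iff_forall_isCompact hΩo).1 hGg K hKΩ hK).congr_right
      (hg0.mono hKΩ)
  exact hFc.tendsto_eLpNorm_zero_of_ae_eq_mul two_ne_zero (fun i => (hF i).2.1)
    (fun i => (hL2 _ (hG i)).1) (hae.mono fun z hz => pow_ne_zero k hz.2) hGF_ae hG0

/-- Inheritance of strong admissibility: in the setting of hypersurface-deleted domains,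
if `𝒜(Ω,ν)` is strongly admissible then so is each `𝒜ₖ(Ω*,ν)`: any sequence in
`𝒜ₖ(Ω*,ν)` whose boundary restrictions are `L²(ν)`-Cauchy and which tends to `0`
uniformly on compacta of `Ω* = Ω∖V` has boundary restrictions tending to `0` in `L²(ν)`. -/
theorem strong_admissibility_inherited
    {n : ℕ} (Ω T : Set (Fin n → ℂ)) (ν : Measure (Fin n → ℂ)) [IsFiniteMeasure ν]
    (ψ : (Fin n → ℂ) → ℂ)
    (hΩo : IsOpen Ω) (hΩc : IsPreconnected Ω)
    (hνT : ν Tᶜ = 0) (hνV : ν (T ∩ ψ ⁻¹' {0}) = 0)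
    (hψc : ContinuousOn ψ (Ω ∪ T)) (M : ℝ) (hψb : ∀ z ∈ Ω ∪ T, ‖ψ z‖ ≤ M)
    (hne : (Ω \ ψ ⁻¹' {0}).Nonempty)
    (𝒜 : Set ((Fin n → ℂ) → ℂ))
    (h𝒜 : 𝒜 = {F | DifferentiableOn ℂ F Ω ∧ ContinuousOn F (Ω ∪ T)})
    (hL2 : ∀ G ∈ 𝒜, MemLp G 2 ν)
    (hadm : ∀ K ⊆ Ω, IsCompact K → ∃ C > 0, ∀ G ∈ 𝒜, ∀ z ∈ K,
      ‖G z‖ ≤ C * (eLpNorm G 2 ν).toReal)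
    (hstrong : ∀ G : ℕ → (Fin n → ℂ) → ℂ, (∀ i, G i ∈ 𝒜) →
      (∀ ε > (0:ℝ), ∃ N, ∀ i ≥ N, ∀ j ≥ N,
        eLpNorm (G i - G j) 2 ν < ENNReal.ofReal ε) →
      (∀ K ⊆ Ω, IsCompact K → TendstoUniformlyOn G 0 atTop K) →
      Tendsto (fun i => eLpNorm (G i) 2 ν) atTop (nhds 0))
    (k : ℕ) (𝒜k : Set ((Fin n → ℂ) → ℂ))
    (h𝒜k : 𝒜k = {F | (∃ G ∈ 𝒜,
        ∀ z ∈ (Ω \ ψ ⁻¹' {0}) ∪ (T \ ψ ⁻¹' {0}), ψ z ^ k * F z = G z) ∧ MemLp F 2 ν}) :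
    ∀ F : ℕ → (Fin n → ℂ) → ℂ, (∀ i, F i ∈ 𝒜k) →
      (∀ ε > (0:ℝ), ∃ N, ∀ i ≥ N, ∀ j ≥ N,
        eLpNorm (F i - F j) 2 ν < ENNReal.ofReal ε) →
      (∀ K ⊆ Ω \ ψ ⁻¹' {0}, IsCompact K → TendstoUniformlyOn F 0 atTop K) →
      Tendsto (fun i => eLpNorm (F i) 2 ν) atTop (nhds 0) :=
  strong_admissibility_inherited_general Ω T ν ψ hΩo hΩc hνT hνV hψc M hψb hne 𝒜 h𝒜 hL2 hadm hstrong
    k 𝒜k h𝒜k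
end

section
/- Let a, r be a point in ℂ and a positive radius, and p₁,…,p_m ∈ D_r(a). If the function w ↦ |(w−p₁)^{k₁} ⋯ (w−p_m)^{k_m}| is constant on the circle |w−a| = r, where each k_j ∈ ℕ₀ and at least one k_j ≥ 1, then p_j = a for every j with k_j ≥ 1. -/
/-!
On the circle `|w - a| = r` we have `r² = (w - a) * conj (w - a)`, hence for every `p`
`(w - p) * (r² - conj (p - a) * (w - a)) = |w - p|² * (w - a)`.
Multiplying these identities, `f * g` agrees on the circle with `c² * (X - a) ^ K`, where
`f = ∏ (X - pⱼ) ^ kⱼ`, `g` is the product of the reflected factors and `K = ∑ kⱼ`. A circle is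
infinite, so this is an identity of polynomials; `c ≠ 0` because no `pⱼ` lies on the circle.
Evaluating at a root `pⱼ` of `f` gives `pⱼ = a`.
-/

open Polynomial ComplexConjugate Metric

theorem Metric.sphere_infinite {E : Type*} [NormedAddCommGroup E] [NormedSpace ℝ E]
    (hE : 1 < Module.rank ℝ E) (x : E) {r : ℝ} (hr : 0 < r) : (sphere x r).Infinite := by
  have : Nontrivial E := rank_pos_iff_nontrivial.mp (zero_lt_one.trans hE)
  obtain ⟨v, hv⟩ := NormedSpace.sphere_nonempty (x := (0 : E)).mpr hr.le
  rw [mem_sphere_zero_iff_norm] at hv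
  have hv0 : v ≠ 0 := norm_pos_iff.mp (hv ▸ hr)
  refine (isConnected_sphere hE x hr.le).isPreconnected.infinite_of_nontrivial
    ⟨x + v, by simpa using hv, x - v, by simpa using hv, fun h => hv0 ?_⟩
  rw [sub_eq_add_neg, add_right_inj, eq_neg_iff_add_eq_zero, ← two_smul ℝ] at h
  exact (smul_eq_zero.mp h).resolve_left two_ne_zero

theorem Polynomial.eq_of_eval_eq_on_sphere {f g : ℂ[X]} (a : ℂ) {r : ℝ} (hr : 0 < r)
    (h : ∀ w ∈ sphere a r, f.eval w = g.eval w) : f = g :=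
  eq_of_infinite_eval_eq f g <| (sphere_infinite (by simp [Complex.rank_real_complex]) a hr).mono h

theorem Polynomial.eq_of_isRoot_of_eval_mul_eq_on_sphere {f g : ℂ[X]} {a z d : ℂ} {r : ℝ}
    (hr : 0 < r) (hd : d ≠ 0) (K : ℕ)
    (h : ∀ w ∈ sphere a r, f.eval w * g.eval w = d * (w - a) ^ K) (hz : f.IsRoot z) : z = a := by
  have hfg : f * g = C d * (X - C a) ^ K :=
    eq_of_eval_eq_on_sphere a hr fun w hw => by simpa using h w hw
  have hzK : d * (z - a) ^ K = 0 := by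
    simpa [hz.eq_zero] using (congr_arg (eval z) hfg).symm
  exact sub_eq_zero.mp (pow_eq_zero_iff'.mp ((mul_eq_zero.mp hzK).resolve_left hd)).1

theorem sub_mul_reflection_eq_norm_sq_mul {a p w : ℂ} {r : ℝ} (hw : w ∈ sphere a r) :
    (w - p) * (r ^ 2 - conj (p - a) * (w - a)) = ‖w - p‖ ^ 2 * (w - a) := by
  have hr : (r : ℂ) ^ 2 = (w - a) * conj (w - a) := by
    rw [Complex.mul_conj', ← mem_sphere_iff_norm.mp hw]
  rw [hr, ← Complex.mul_conj', map_sub, map_sub, map_sub]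
  ring

theorem prod_mul_prod_reflection_eq {ι : Type*} [Fintype ι] {a w : ℂ} {r : ℝ}
    (hw : w ∈ sphere a r) (p : ι → ℂ) (k : ι → ℕ) :
    (∏ j, (w - p j) ^ k j) * ∏ j, (r ^ 2 - conj (p j - a) * (w - a)) ^ k j =
      ‖∏ j, (w - p j) ^ k j‖ ^ 2 * (w - a) ^ ∑ j, k j := by
  rw [← Finset.prod_mul_distrib]
  simp_rw [← mul_pow, sub_mul_reflection_eq_norm_sq_mul hw, mul_pow, Finset.prod_mul_distrib,
    Finset.prod_pow_eq_pow_sum, norm_prod, norm_pow]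
  push_cast
  simp_rw [← Finset.prod_pow, ← pow_mul, mul_comm]

theorem prod_sub_pow_ne_zero {ι : Type*} [Fintype ι] {a w : ℂ} {r : ℝ} (hw : w ∈ sphere a r)
    {p : ι → ℂ} (hp : ∀ j, p j ∈ ball a r) (k : ι → ℕ) : ∏ j, (w - p j) ^ k j ≠ 0 :=
  Finset.prod_ne_zero_iff.mpr fun j _ => pow_ne_zero _ <| sub_ne_zero.mpr
    fun h => (mem_ball.mp (hp j)).ne (h ▸ mem_sphere.mp hw)

theorem constant_modulus_on_circle_forces_center_general
    (a : ℂ) (r : ℝ) (hr : 0 < r) (m : ℕ) (p : Fin m → ℂ) (k : Fin m → ℕ)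
    (hp : ∀ j, p j ∈ Metric.ball a r)
    (c : ℝ)
    (hconst : ∀ w ∈ Metric.sphere a r, ‖∏ j, (w - p j) ^ (k j)‖ = c) :
    ∀ j, 1 ≤ k j → p j = a := by
  intro j hj
  obtain ⟨w₀, hw₀⟩ := NormedSpace.sphere_nonempty (x := a).mpr hr.le
  have hc : c ≠ 0 := hconst w₀ hw₀ ▸ norm_ne_zero_iff.mpr (prod_sub_pow_ne_zero hw₀ hp k)
  let f : ℂ[X] := ∏ j, (X - C (p j)) ^ k j
  let g : ℂ[X] := ∏ j, (C ((r : ℂ) ^ 2) - C (conj (p j - a)) * (X - C a)) ^ k j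
  have hfg (w : ℂ) (hw : w ∈ sphere a r) :
      f.eval w * g.eval w = (c : ℂ) ^ 2 * (w - a) ^ ∑ j, k j := by
    simpa [f, g, eval_prod, hconst w hw] using prod_mul_prod_reflection_eq hw p k
  have hf : f.IsRoot (p j) := by
    simpa [f, eval_prod] using Finset.prod_eq_zero (Finset.mem_univ j)
      (by simp [Nat.one_le_iff_ne_zero.mp hj] : (p j - p j) ^ k j = 0)
  exact eq_of_isRoot_of_eval_mul_eq_on_sphere hr (by exact_mod_cast pow_ne_zero 2 hc) _ hfg hf

/-- If a finite product `∏ (w - pⱼ)^{kⱼ}` (with the `pⱼ` in the disk `D_r(a)` and some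
`kⱼ ≥ 1`) has constant modulus on the circle `|w - a| = r`, then `pⱼ = a` for every `j`
with `kⱼ ≥ 1`. -/
theorem constant_modulus_on_circle_forces_center
    (a : ℂ) (r : ℝ) (hr : 0 < r) (m : ℕ) (p : Fin m → ℂ) (k : Fin m → ℕ)
    (hp : ∀ j, p j ∈ Metric.ball a r) (hk : ∃ j, 1 ≤ k j)
    (c : ℝ)
    (hconst : ∀ w ∈ Metric.sphere a r, ‖∏ j, (w - p j) ^ (k j)‖ = c) :
    ∀ j, 1 ≤ k j → p j = a :=
  constant_modulus_on_circle_forces_center_general a r hr m p k hp c hconst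
end

section
/- For every p ∈ ℕ with p > 1, there exists a doubly-indexed sequence (a_{j,ℓ})_{j,ℓ≥0} of nonnegative reals such that ∑_{j,ℓ≥0} |a_{j,ℓ}|² β(j/p + 1, ℓ/p + 1) < ∞ but ∑_{j,ℓ≥0} |a_{j,ℓ}|² β((j+1)/p, (ℓ+1)/p) = ∞. (For example, a_{j,ℓ} = β(m+1,n+1)^{-1/2}/(mn) when j = pm, ℓ = pn with m,n ∈ ℕ, and 0 otherwise.) Consequently the Hardy space of E_p with respect to surface measure is strictly contained in the Hardy space with respect to the Monge–Ampère boundary measure when p > 1. -/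
/-- The Euler beta function `β(x,y) = ∫₀¹ s^{x-1}(1-s)^{y-1} ds`. -/
noncomputable def eulerBeta (x y : ℝ) : ℝ :=
  ∫ s in (0:ℝ)..1, s ^ (x - 1) * (1 - s) ^ (y - 1)

/-!
Take `a` supported on the row `ℓ = 0` with `a_{j,0}² = (j+1)^{1/p-1}`. Since `β(x,1) = 1/x`, the
surface-measure terms are `O(j^{1/p-2})`, which is summable for `p > 1`. On the other hand
`β(x,y) ≥ (2x)^{-y}/(2y)` for `x ≥ 2` — by Bernoulli's inequality `s^{x-1} ≥ 1/2` on
`[1 - 1/(2x), 1]`, and `(1-s)^{y-1}` has integral `(2x)^{-y}/y` there — so the Monge–Ampère terms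
`(j+1)^{1/p-1} β((j+1)/p, 1/p)` are bounded below by a multiple of `1/(j+1)`.
-/

open Real MeasureTheory intervalIntegral Set

lemma eulerBeta_one_right {x : ℝ} (hx : 0 < x) : eulerBeta x 1 = x⁻¹ := by
  simp only [eulerBeta, sub_self, rpow_zero, mul_one]
  rw [integral_rpow (Or.inl (by linarith)), sub_add_cancel, one_rpow, zero_rpow hx.ne']
  simp

lemma intervalIntegrable_one_sub_rpow {y : ℝ} (hy : 0 < y) :
    IntervalIntegrable (fun s : ℝ => (1 - s) ^ (y - 1)) volume 0 1 := by
  simpa using ((intervalIntegrable_rpow' (by linarith) :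
    IntervalIntegrable (fun t : ℝ => t ^ (y - 1)) volume 0 1).comp_sub_left 1).symm

lemma intervalIntegrable_eulerBeta_integrand {x y : ℝ} (hx : 1 ≤ x) (hy : 0 < y) :
    IntervalIntegrable (fun s : ℝ => s ^ (x - 1) * (1 - s) ^ (y - 1)) volume 0 1 :=
  (intervalIntegrable_one_sub_rpow hy).continuousOn_mul fun s _ =>
    (continuousAt_rpow_const s (x - 1) (Or.inr (by linarith))).continuousWithinAt

lemma integral_one_sub_rpow (δ : ℝ) {y : ℝ} (hy : 0 < y) :
    ∫ s in (1 - δ)..1, (1 - s) ^ (y - 1) = δ ^ y / y := by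
  rw [integral_comp_sub_left (fun t : ℝ => t ^ (y - 1)), sub_self, sub_sub_cancel,
    integral_rpow (Or.inl (by linarith)), sub_add_cancel, zero_rpow hy.ne', sub_zero]

lemma half_le_rpow_of_mem_Icc {x s : ℝ} (hx : 2 ≤ x) (hs : s ∈ Icc (1 - (2 * x)⁻¹) 1) :
    1 / 2 ≤ s ^ (x - 1) := by
  have hδ : x * (2 * x)⁻¹ = 1 / 2 := by field_simp
  have hbern := one_add_mul_self_le_rpow_one_add (s := s - 1)
    (by nlinarith [hs.1, inv_pos.2 (by linarith : (0:ℝ) < 2 * x), hδ]) (p := x - 1) (by linarith)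
  rw [add_sub_cancel] at hbern
  nlinarith [hs.1, hs.2]

lemma rpow_neg_div_le_eulerBeta {x y : ℝ} (hx : 2 ≤ x) (hy : 0 < y) :
    (2 * x) ^ (-y) / (2 * y) ≤ eulerBeta x y := by
  set δ := (2 * x)⁻¹ with hδ
  have hδ0 : 0 < δ := by positivity
  have hδ1 : δ ≤ 1 := by rw [hδ]; exact inv_le_one_of_one_le₀ (by linarith)
  have hsub : uIcc (1 - δ) 1 ⊆ uIcc 0 1 :=
    uIcc_subset_uIcc (mem_uIcc_of_le (by linarith) (by linarith)) (mem_uIcc_of_le zero_le_one le_rfl)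
  calc (2 * x) ^ (-y) / (2 * y) = ∫ s in (1 - δ)..1, 1 / 2 * (1 - s) ^ (y - 1) := by
        rw [intervalIntegral.integral_const_mul, integral_one_sub_rpow _ hy, hδ,
          inv_rpow (by linarith), ← rpow_neg (by linarith)]
        field_simp
    _ ≤ ∫ s in (1 - δ)..1, s ^ (x - 1) * (1 - s) ^ (y - 1) := by
        refine integral_mono_on (by linarith)
          (((intervalIntegrable_one_sub_rpow hy).mono_set hsub).const_mul _)
          ((intervalIntegrable_eulerBeta_integrand (by linarith) hy).mono_set hsub) ?_
        intro s hs
        exact mul_le_mul_of_nonneg_right (half_le_rpow_of_mem_Icc hx hs)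
          (rpow_nonneg (by linarith [hs.2]) _)
    _ ≤ eulerBeta x y := by
        refine integral_mono_interval (by linarith) (by linarith) le_rfl ?_
          (intervalIntegrable_eulerBeta_integrand (by linarith) hy)
        filter_upwards [ae_restrict_mem measurableSet_Ioc] with s hs
        exact mul_nonneg (rpow_nonneg hs.1.le _) (rpow_nonneg (by linarith [hs.2]) _)

lemma summable_natCast_add_one_rpow {r : ℝ} (hr : r < -1) :
    Summable fun j : ℕ => ((j : ℝ) + 1) ^ r := by
  simpa using (summable_nat_add_iff 1).2 (summable_nat_rpow.2 hr)

lemma not_summable_natCast_add_one_inv : ¬Summable fun j : ℕ => ((j : ℝ) + 1)⁻¹ := by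
  simpa using (summable_nat_add_iff 1).not.2 not_summable_natCast_inv

lemma summable_rpow_mul_eulerBeta_div_add_one_one {P : ℝ} (hP : 1 < P) :
    Summable fun j : ℕ => ((j : ℝ) + 1) ^ (1 / P - 1) * eulerBeta (j / P + 1) 1 := by
  have hP0 : 0 < P := by linarith
  refine .of_nonneg_of_le (fun j => ?_) (fun j => ?_)
    ((summable_natCast_add_one_rpow (r := 1 / P - 2) ?_).mul_left P)
  · rw [eulerBeta_one_right (by positivity)]; positivity
  · have hn : (0 : ℝ) < j + 1 := by positivity
    have hinv : (j / P + 1 : ℝ)⁻¹ ≤ P / (j + 1) := by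
      rw [inv_le_iff_one_le_mul₀ (by positivity), div_add_one hP0.ne', div_mul_div_comm,
        one_le_div (by positivity)]
      nlinarith
    calc ((j : ℝ) + 1) ^ (1 / P - 1) * eulerBeta (j / P + 1) 1
        ≤ ((j : ℝ) + 1) ^ (1 / P - 1) * (P / (j + 1)) := by
          rw [eulerBeta_one_right (by positivity)]; gcongr
      _ = P * ((j : ℝ) + 1) ^ (1 / P - 2) := by
          rw [show 1 / P - 2 = (1 / P - 1) - 1 by ring, rpow_sub_one hn.ne' (1 / P - 1)]; ring
  · linarith [(div_lt_one hP0).2 hP]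

lemma inv_le_rpow_mul_eulerBeta_div_one_div {P n : ℝ} (hP : 0 < P) (hn : 2 * P ≤ n) :
    (2 / P) ^ (-(1 / P)) * (P / 2) * n⁻¹ ≤ n ^ (1 / P - 1) * eulerBeta (n / P) (1 / P) := by
  have hn0 : 0 < n := by linarith
  calc (2 / P) ^ (-(1 / P)) * (P / 2) * n⁻¹
      = n ^ (1 / P - 1) * ((2 * (n / P)) ^ (-(1 / P)) / (2 * (1 / P))) := by
        rw [show 2 * (n / P) = 2 / P * n by ring, mul_rpow (by positivity) hn0.le]
        rw [show n⁻¹ = n ^ (1 / P - 1) * n ^ (-(1 / P)) by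
          rw [← rpow_add hn0, ← rpow_neg_one]; ring_nf]
        field_simp
    _ ≤ n ^ (1 / P - 1) * eulerBeta (n / P) (1 / P) := by
        gcongr
        exact rpow_neg_div_le_eulerBeta (by rwa [le_div_iff₀ hP]) (by positivity)

lemma not_summable_rpow_mul_eulerBeta_div_one_div {P : ℝ} (hP : 0 < P) :
    ¬Summable fun j : ℕ =>
      ((j : ℝ) + 1) ^ (1 / P - 1) * eulerBeta (((j : ℝ) + 1) / P) (1 / P) := by
  set c := (2 / P) ^ (-(1 / P)) * (P / 2)
  have hc : 0 < c := by positivity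
  intro hsum
  refine not_summable_natCast_add_one_inv (.of_norm_bounded_eventually_nat (hsum.mul_left c⁻¹) ?_)
  filter_upwards [Filter.eventually_ge_atTop ⌈2 * P⌉₊] with j hj
  have h2P : 2 * P ≤ (j : ℝ) + 1 := by
    have := Nat.ceil_le.1 hj; linarith
  rw [norm_of_nonneg (by positivity), le_inv_mul_iff₀ hc]
  exact inv_le_rpow_mul_eulerBeta_div_one_div hP h2P

lemma summable_sq_ite_snd_eq_mul_iff {α β : Type*} [DecidableEq β] (b₀ : β) (b : α → ℝ)
    (w : α × β → ℝ) :
    Summable (fun x : α × β => (if x.2 = b₀ then b x.1 else 0) ^ 2 * w x) ↔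
      Summable fun a => b a ^ 2 * w (a, b₀) := by
  rw [← (Prod.mk_left_injective b₀).summable_iff]
  · simp [Function.comp_def]
  · rintro ⟨a, c⟩ hx
    have hc : c ≠ b₀ := by rintro rfl; exact hx ⟨a, rfl⟩
    simp [hc]

/-- For every `p > 1` there is a nonnegative doubly-indexed sequence `a_{j,ℓ}` with
`∑ |a_{j,ℓ}|² β(j/p+1, ℓ/p+1) < ∞` but `∑ |a_{j,ℓ}|² β((j+1)/p, (ℓ+1)/p) = ∞`
(so the Hardy space of the egg `E_p` w.r.t. surface measure is strictly smaller than
the one w.r.t. the Monge–Ampère boundary measure). -/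
theorem exists_seq_summable_MA_not_surface (p : ℕ) (hp : 1 < p) :
    ∃ a : ℕ → ℕ → ℝ, (∀ j ℓ, 0 ≤ a j ℓ) ∧
      Summable (fun jl : ℕ × ℕ =>
        (a jl.1 jl.2) ^ 2 * eulerBeta ((jl.1 : ℝ) / p + 1) ((jl.2 : ℝ) / p + 1)) ∧
      ¬ Summable (fun jl : ℕ × ℕ =>
        (a jl.1 jl.2) ^ 2 * eulerBeta (((jl.1 : ℝ) + 1) / p) (((jl.2 : ℝ) + 1) / p)) := by
  have hP : (1 : ℝ) < p := by exact_mod_cast hp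
  set b : ℕ → ℝ := fun j => √(((j : ℝ) + 1) ^ (1 / (p : ℝ) - 1))
  have hb : ∀ j, b j ^ 2 = ((j : ℝ) + 1) ^ (1 / (p : ℝ) - 1) := fun j => sq_sqrt (by positivity)
  refine ⟨fun j ℓ => if ℓ = 0 then b j else 0, fun j ℓ => by positivity,
    (summable_sq_ite_snd_eq_mul_iff (0 : ℕ) b
      (fun jl : ℕ × ℕ => eulerBeta ((jl.1 : ℝ) / p + 1) ((jl.2 : ℝ) / p + 1))).2 ?_,
    (summable_sq_ite_snd_eq_mul_iff (0 : ℕ) b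
      (fun jl : ℕ × ℕ => eulerBeta (((jl.1 : ℝ) + 1) / p) (((jl.2 : ℝ) + 1) / p))).not.2 ?_⟩
  · simpa [hb] using summable_rpow_mul_eulerBeta_div_add_one_one hP
  · simpa [hb] using not_summable_rpow_mul_eulerBeta_div_one_div (by linarith : (0 : ℝ) < p)
end

section
/- Let m, n ∈ ℕ, b ∈ ℂ∖{0}, and let b₁,…,b_m be the m-th roots of b (with multiplicity). Then for all x, y ∈ ℂ with xᵐ ≠ bⁿ and yᵐ ≠ b, ∑_{ℓ=1}^{m} b_ℓⁿ / ((x − b_ℓⁿ)(y − b_ℓ)) = m b^{n+1} (∑_{p,q=0}^{m−1} c_{p,q} x^p y^q) / ((xᵐ − bⁿ)(yᵐ − b)), where c_{p,q} = b^{−(np+1+q)/m} if np + 1 + q ≡ 0 (mod m), and c_{p,q} = 0 otherwise. -/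
/-!
For an `m`-th root `w` of `b`, the geometric series give
`1 / (x - wⁿ) = bⁿ ∑ₚ xᵖ w^{-n(p+1)} / (xᵐ - bⁿ)` and
`1 / (y - w) = b ∑_q y^q w^{-(q+1)} / (yᵐ - b)`, so every summand becomes `b^{n+1} ∑_{p,q} xᵖ y^q w^{-(np+1+q)}` over the common denominator.
The inverses of the roots of `b` are the roots `ζʲρ` of `b⁻¹`, `ζ` a primitive `m`-th root of
unity, so their `k`-th power sum is `m b^{-k/m}` if `m ∣ k` and a vanishing geometric sum otherwise.
-/

open Finset Polynomial

theorem IsPrimitiveRoot.sum_range_mul_pow {R : Type*} [CommRing R] [IsDomain R] {ζ : R} {m : ℕ}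
    (hζ : IsPrimitiveRoot ζ m) (ρ : R) (k : ℕ) :
    ∑ j ∈ range m, (ζ ^ j * ρ) ^ k = if m ∣ k then m * (ρ ^ m) ^ (k / m) else 0 := by
  have hsum : ∑ j ∈ range m, (ζ ^ j * ρ) ^ k = (∑ j ∈ range m, (ζ ^ k) ^ j) * ρ ^ k := by
    rw [sum_mul]
    refine sum_congr rfl fun j _ => ?_
    rw [mul_pow, ← pow_mul, ← pow_mul, mul_comm j k]
  split_ifs with hk
  · rw [hsum, (hζ.pow_eq_one_iff_dvd k).2 hk, ← pow_mul, Nat.mul_div_cancel' hk]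
    simp
  · have hne : ζ ^ k - 1 ≠ 0 := sub_ne_zero.2 (mt (hζ.pow_eq_one_iff_dvd k).1 hk)
    have hgeom : (∑ j ∈ range m, (ζ ^ k) ^ j) * (ζ ^ k - 1) = 0 := by
      rw [geom_sum_mul, ← pow_mul, mul_comm, pow_mul, hζ.pow_eq_one, one_pow, sub_self]
    rw [hsum, (mul_eq_zero.1 hgeom).resolve_right hne, zero_mul]

theorem IsPrimitiveRoot.sum_map_pow_nthRoots {R : Type*} [CommRing R] [IsDomain R] {ζ : R}
    {m : ℕ} (hζ : IsPrimitiveRoot ζ m) {ρ b : R} (hρ : ρ ^ m = b) (k : ℕ) :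
    ((nthRoots m b).map (· ^ k)).sum = if m ∣ k then m * b ^ (k / m) else 0 := by
  rw [hζ.nthRoots_eq hρ, Multiset.map_map, ← range_val, ← sum_eq_multiset_sum, ← hρ]
  exact hζ.sum_range_mul_pow ρ k

theorem IsPrimitiveRoot.map_inv_nthRoots {K : Type*} [Field K] {ζ : K} {m : ℕ}
    (hζ : IsPrimitiveRoot ζ m) {ρ b : K} (hρ : ρ ^ m = b) :
    (nthRoots m b).map (·⁻¹) = nthRoots m b⁻¹ := by
  rw [hζ.nthRoots_eq hρ, hζ.inv.nthRoots_eq (by rw [inv_pow, hρ]), Multiset.map_map]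
  congr 1
  funext j
  simp [mul_comm]

theorem map_univ_eq_nthRoots {R : Type*} [CommRing R] [IsDomain R] [Infinite R] {m : ℕ} {b : R}
    {r : Fin m → R} (hr : ∀ z, z ^ m - b = ∏ ℓ, (z - r ℓ)) :
    univ.val.map r = nthRoots m b := by
  have hpoly : ((univ.val.map r).map fun a => X - C a).prod = X ^ m - C b := by
    refine Polynomial.funext fun z => ?_
    rw [eval_multiset_prod, Multiset.map_map, Multiset.map_map, ← prod_eq_multiset_prod]
    simp [hr]
  rw [nthRoots, ← hpoly, roots_multiset_prod_X_sub_C]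

theorem pow_eq_of_forall_pow_sub_eq_prod {R : Type*} [CommRing R] {m : ℕ} {b : R}
    {r : Fin m → R} (hr : ∀ z, z ^ m - b = ∏ ℓ, (z - r ℓ)) (ℓ : Fin m) : r ℓ ^ m = b := by
  have h := hr (r ℓ)
  rwa [prod_eq_zero (mem_univ ℓ) (sub_self _), sub_eq_zero] at h

theorem IsPrimitiveRoot.sum_inv_pow_of_forall_pow_sub_eq_prod {K : Type*} [Field K] [Infinite K]
    {ζ : K} {m : ℕ} (hζ : IsPrimitiveRoot ζ m) (hm : 0 < m) {b : K} {r : Fin m → K}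
    (hr : ∀ z, z ^ m - b = ∏ ℓ, (z - r ℓ)) (k : ℕ) :
    ∑ ℓ, (r ℓ)⁻¹ ^ k = if m ∣ k then m * b⁻¹ ^ (k / m) else 0 := by
  have hρ := pow_eq_of_forall_pow_sub_eq_prod hr ⟨0, hm⟩
  have hsum : ∑ ℓ, (r ℓ)⁻¹ ^ k = (((univ.val.map r).map (·⁻¹)).map (· ^ k)).sum := by
    rw [Multiset.map_map, Multiset.map_map]
    rfl
  rw [hsum, map_univ_eq_nthRoots hr, hζ.map_inv_nthRoots hρ,
    hζ.sum_map_pow_nthRoots (by rw [inv_pow, hρ] : _ = b⁻¹)]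

theorem one_div_sub_eq_geom_sum {K : Type*} [Field K] {a z : K} (m : ℕ) (ha : a ≠ 0)
    (hz : z ^ m ≠ a ^ m) :
    1 / (z - a) = a ^ m * (∑ i ∈ range m, z ^ i * a⁻¹ ^ (i + 1)) / (z ^ m - a ^ m) := by
  have hza : z - a ≠ 0 := fun h => hz (by rw [sub_eq_zero.1 h])
  have haa : a * a⁻¹ = 1 := mul_inv_cancel₀ ha
  have key : (∑ i ∈ range m, z ^ i * a⁻¹ ^ (i + 1)) * (z - a) = (z ^ m - a ^ m) * a⁻¹ ^ m := by
    calc _ = (∑ i ∈ range m, (z * a⁻¹) ^ i) * (z * a⁻¹ - 1) := by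
          rw [sum_mul, sum_mul]
          refine sum_congr rfl fun i _ => ?_
          linear_combination (-(z ^ i * a⁻¹ ^ i)) * haa
      _ = _ := by rw [geom_sum_mul, mul_pow, sub_mul, ← mul_pow a, haa, one_pow]
  rw [div_eq_div_iff hza (sub_ne_zero.2 hz), mul_assoc, key, mul_left_comm, ← mul_pow, haa,
    one_pow, one_mul, mul_one]

theorem pow_div_sub_pow_mul_sub_eq {K : Type*} [Field K] {w x y : K} (m n : ℕ) (hw : w ≠ 0)
    (hx : x ^ m ≠ (w ^ m) ^ n) (hy : y ^ m ≠ w ^ m) :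
    w ^ n / ((x - w ^ n) * (y - w)) = (w ^ m) ^ (n + 1) *
      (∑ p ∈ range m, ∑ q ∈ range m, x ^ p * y ^ q * w⁻¹ ^ (n * p + 1 + q))
        / ((x ^ m - (w ^ m) ^ n) * (y ^ m - w ^ m)) := by
  have hx' : x ^ m ≠ (w ^ n) ^ m := by rwa [← pow_mul, mul_comm, pow_mul]
  have hsplit : w ^ n / ((x - w ^ n) * (y - w)) = w ^ n * (1 / (x - w ^ n)) * (1 / (y - w)) := by
    rw [mul_assoc, one_div_mul_one_div, div_eq_mul_one_div]
  have hnum : w ^ n * (∑ p ∈ range m, x ^ p * (w ^ n)⁻¹ ^ (p + 1)) *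
      (∑ q ∈ range m, y ^ q * w⁻¹ ^ (q + 1)) =
      ∑ p ∈ range m, ∑ q ∈ range m, x ^ p * y ^ q * w⁻¹ ^ (n * p + 1 + q) := by
    have hpow : w ^ n * w⁻¹ ^ n = 1 := by rw [← mul_pow, mul_inv_cancel₀ hw, one_pow]
    rw [mul_assoc, sum_mul_sum, mul_sum]
    refine sum_congr rfl fun p _ => ?_
    rw [mul_sum]
    refine sum_congr rfl fun q _ => ?_
    rw [← inv_pow]
    linear_combination (x ^ p * y ^ q * w⁻¹ ^ (n * p + 1 + q)) * hpow
  rw [hsplit, one_div_sub_eq_geom_sum m (pow_ne_zero n hw) hx',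
    one_div_sub_eq_geom_sum m hw hy, ← hnum, ← pow_mul, mul_comm n m, pow_mul]
  field_simp
  ring

theorem partial_fraction_roots_identity_general (m n : ℕ) (hm : 0 < m)
    (b : ℂ) (hb : b ≠ 0) (r : Fin m → ℂ)
    (hr : ∀ z : ℂ, z ^ m - b = ∏ ℓ, (z - r ℓ))
    (x y : ℂ) (hx : x ^ m ≠ b ^ n) (hy : y ^ m ≠ b) :
    ∑ ℓ, (r ℓ) ^ n / ((x - (r ℓ) ^ n) * (y - r ℓ))
      = (m : ℂ) * b ^ (n + 1) *
          (∑ p ∈ Finset.range m, ∑ q ∈ Finset.range m,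
            (if (n * p + 1 + q) % m = 0 then b ^ (-(((n * p + 1 + q) / m : ℕ) : ℤ)) else 0)
              * x ^ p * y ^ q)
        / ((x ^ m - b ^ n) * (y ^ m - b)) := by
  have hroot := pow_eq_of_forall_pow_sub_eq_prod hr
  have hr0 : ∀ ℓ, r ℓ ≠ 0 := fun ℓ h => hb (by rw [← hroot ℓ, h, zero_pow hm.ne'])
  have hpowsum := (Complex.isPrimitiveRoot_exp m hm.ne').sum_inv_pow_of_forall_pow_sub_eq_prod hm hr
  have hcoef : ∀ k, (if m ∣ k then (m : ℂ) * b⁻¹ ^ (k / m) else 0)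
      = m * if k % m = 0 then b ^ (-((k / m : ℕ) : ℤ)) else 0 := fun k => by
    simp only [Nat.dvd_iff_mod_eq_zero, zpow_neg, zpow_natCast, inv_pow, mul_ite, mul_zero]
  calc ∑ ℓ, (r ℓ) ^ n / ((x - (r ℓ) ^ n) * (y - r ℓ))
      = ∑ ℓ, b ^ (n + 1) * (∑ p ∈ range m, ∑ q ∈ range m,
          x ^ p * y ^ q * (r ℓ)⁻¹ ^ (n * p + 1 + q)) / ((x ^ m - b ^ n) * (y ^ m - b)) :=
        sum_congr rfl fun ℓ _ => by
          simpa only [hroot] using pow_div_sub_pow_mul_sub_eq m n (hr0 ℓ)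
            (by rwa [hroot]) (by rwa [hroot])
    _ = b ^ (n + 1) * (∑ p ∈ range m, ∑ q ∈ range m,
          x ^ p * y ^ q * ∑ ℓ, (r ℓ)⁻¹ ^ (n * p + 1 + q)) / ((x ^ m - b ^ n) * (y ^ m - b)) := by
        simp only [← sum_div, ← mul_sum]
        rw [sum_comm]
        congr 2
        refine sum_congr rfl fun p _ => ?_
        rw [sum_comm]
        simp only [mul_sum]
    _ = _ := by
        simp only [hpowsum, hcoef, mul_sum]
        congr 1
        exact sum_congr rfl fun p _ => sum_congr rfl fun q _ => by ring

/-- Partial-fraction identity: if `b₁,…,b_m` are the `m`-th roots of `b ≠ 0` (with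
multiplicity, i.e. `z^m - b = ∏ (z - bₗ)`), then for `x^m ≠ b^n` and `y^m ≠ b`,
`∑ₗ bₗⁿ/((x - bₗⁿ)(y - bₗ)) = m b^{n+1} (∑_{p,q} c_{p,q} x^p y^q)/((x^m-b^n)(y^m-b))`
where `c_{p,q} = b^{-(np+1+q)/m}` when `m ∣ np+1+q` and `0` otherwise. -/
theorem partial_fraction_roots_identity (m n : ℕ) (hm : 0 < m) (hn : 0 < n)
    (b : ℂ) (hb : b ≠ 0) (r : Fin m → ℂ)
    (hr : ∀ z : ℂ, z ^ m - b = ∏ ℓ, (z - r ℓ))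
    (x y : ℂ) (hx : x ^ m ≠ b ^ n) (hy : y ^ m ≠ b) :
    ∑ ℓ, (r ℓ) ^ n / ((x - (r ℓ) ^ n) * (y - r ℓ))
      = (m : ℂ) * b ^ (n + 1) *
          (∑ p ∈ Finset.range m, ∑ q ∈ Finset.range m,
            (if (n * p + 1 + q) % m = 0 then b ^ (-(((n * p + 1 + q) / m : ℕ) : ℤ)) else 0)
              * x ^ p * y ^ q)
        / ((x ^ m - b ^ n) * (y ^ m - b)) :=
  partial_fraction_roots_identity_general m n hm b hb r hr x y hx hy
end
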